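/- The Gauss curvature K = det(n₁₂−n, n₂−n₁, N)/det(f₁₂−f, f₂−f₁, N) of an edge-constraint quad is independent of the choice of face normal N: if N and N′ are both unit vectors perpendicular to span{n₁₂−n, n₂−n₁} with both denominators nonzero, the two quotients agree. -/

import Mathlib

/-!
Both determinants are triple products: `det3 a b N = (a ⨯₃ b) ⬝ᵥ N`. If `N ⟂ a, b`, the vector
triple product expansion gives `(a ⨯₃ b) ⨯₃ N = 0`, and the same holds for `N'`. For such a
`u = a ⨯₃ b`, the Leibniz rule for `⨯₃` gives `u ⨯₃ (N' ⨯₃ N) = 0`, i.e.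
`(u ⬝ᵥ N) • N' = (u ⬝ᵥ N') • N`. Dotting with `v = c ⨯₃ d` shows that passing from `N` to `N'`
rescales numerator and denominator of the curvature by the same factor.
-/

/-- Euclidean dot product on `ℝ³`. -/
def dot3 (u v : Fin 3 → ℝ) : ℝ := u 0 * v 0 + u 1 * v 1 + u 2 * v 2

/-- `3×3` determinant of three vectors of `ℝ³`. -/
def det3 (u v w : Fin 3 → ℝ) : ℝ :=
  Matrix.det !![u 0, v 0, w 0; u 1, v 1, w 1; u 2, v 2, w 2]

open Matrix

section CrossProduct

variable {R : Type*} [CommRing R]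

theorem cross_cross_eq_zero_of_dotProduct_eq_zero {a b w : Fin 3 → R}
    (ha : a ⬝ᵥ w = 0) (hb : b ⬝ᵥ w = 0) : a ⨯₃ b ⨯₃ w = 0 := by
  simp [cross_cross_eq_smul_sub_smul, ha, hb]

theorem dotProduct_mul_dotProduct_comm_of_cross_eq_zero {u w w' : Fin 3 → R}
    (hw : u ⨯₃ w = 0) (hw' : u ⨯₃ w' = 0) (v : Fin 3 → R) :
    u ⬝ᵥ w * v ⬝ᵥ w' = u ⬝ᵥ w' * v ⬝ᵥ w := by
  have h : (u ⬝ᵥ w) • w' - (u ⬝ᵥ w') • w = 0 := by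
    rw [dotProduct_comm u w', ← cross_cross_eq_smul_sub_smul']
    simp [leibniz_cross, hw, hw']
  have hv := congrArg (v ⬝ᵥ ·) h
  simp only [dotProduct_sub, dotProduct_smul, smul_eq_mul, dotProduct_zero] at hv
  linear_combination hv

end CrossProduct

theorem dot3_eq_dotProduct (u v : Fin 3 → ℝ) : dot3 u v = u ⬝ᵥ v :=
  (vec3_dotProduct u v).symm

theorem det3_eq_cross_dotProduct (u v w : Fin 3 → ℝ) : det3 u v w = u ⨯₃ v ⬝ᵥ w := by
  rw [det3, det_fin_three, vec3_dotProduct, cross_apply]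
  simp only [Fin.isValue, of_apply, cons_val', cons_val_zero, cons_val_fin_one, cons_val_one,
    cons_val]
  ring

theorem det3_mul_det3_comm {a b w w' : Fin 3 → ℝ}
    (ha : dot3 w a = 0) (hb : dot3 w b = 0) (ha' : dot3 w' a = 0) (hb' : dot3 w' b = 0)
    (c d : Fin 3 → ℝ) :
    det3 a b w * det3 c d w' = det3 a b w' * det3 c d w := by
  simp only [dot3_eq_dotProduct, dotProduct_comm w, dotProduct_comm w'] at ha hb ha' hb'
  simp only [det3_eq_cross_dotProduct]
  exact dotProduct_mul_dotProduct_comm_of_cross_eq_zero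
    (cross_cross_eq_zero_of_dotProduct_eq_zero ha hb)
    (cross_cross_eq_zero_of_dotProduct_eq_zero ha' hb') _

theorem stmt_6_general (f f₁ f₂ f₁₂ n n₁ n₂ n₁₂ : Fin 3 → ℝ)
    (N N' : Fin 3 → ℝ)
    (hNa : dot3 N (n₁₂ - n) = 0) (hNb : dot3 N (n₂ - n₁) = 0)
    (hN'a : dot3 N' (n₁₂ - n) = 0) (hN'b : dot3 N' (n₂ - n₁) = 0)
    (hden : det3 (f₁₂ - f) (f₂ - f₁) N ≠ 0) (hden' : det3 (f₁₂ - f) (f₂ - f₁) N' ≠ 0) :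
    det3 (n₁₂ - n) (n₂ - n₁) N / det3 (f₁₂ - f) (f₂ - f₁) N =
      det3 (n₁₂ - n) (n₂ - n₁) N' / det3 (f₁₂ - f) (f₂ - f₁) N' := by
  rw [div_eq_div_iff hden hden']
  exact det3_mul_det3_comm hNa hNb hN'a hN'b _ _

/-- the Gauss curvature of an edge-constraint quad does not depend on
the choice of unit face normal. -/
theorem stmt_6 (f f₁ f₂ f₁₂ n n₁ n₂ n₁₂ : Fin 3 → ℝ)
    (hn : dot3 n n = 1) (hn₁ : dot3 n₁ n₁ = 1) (hn₂ : dot3 n₂ n₂ = 1)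
    (hn₁₂ : dot3 n₁₂ n₁₂ = 1)
    (hec1 : dot3 (f₁ - f) (n₁ + n) = 0) (hec2 : dot3 (f₂ - f) (n₂ + n) = 0)
    (hec3 : dot3 (f₁₂ - f₁) (n₁₂ + n₁) = 0) (hec4 : dot3 (f₁₂ - f₂) (n₁₂ + n₂) = 0)
    (N N' : Fin 3 → ℝ)
    (hN : dot3 N N = 1) (hN' : dot3 N' N' = 1)
    (hNa : dot3 N (n₁₂ - n) = 0) (hNb : dot3 N (n₂ - n₁) = 0)
    (hN'a : dot3 N' (n₁₂ - n) = 0) (hN'b : dot3 N' (n₂ - n₁) = 0)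
    (hden : det3 (f₁₂ - f) (f₂ - f₁) N ≠ 0) (hden' : det3 (f₁₂ - f) (f₂ - f₁) N' ≠ 0) :
    det3 (n₁₂ - n) (n₂ - n₁) N / det3 (f₁₂ - f) (f₂ - f₁) N =
      det3 (n₁₂ - n) (n₂ - n₁) N' / det3 (f₁₂ - f) (f₂ - f₁) N' :=
  stmt_6_general f f₁ f₂ f₁₂ n n₁ n₂ n₁₂ N N' hNa hNb hN'a hN'b hden hden'
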